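/- Let (b_n)_{n≥1} be the paperfolding sequence. Then 8128·∑_{n≥1} (2b_n − 1)/n⁷ = −(122/45)·π⁷. -/
import Mathlib


/-- Even-index Euler numbers: `E2 k = E_{2k}`, where `1/cosh t = ∑ E_n t^n/n!`
(equivalently, `E_0 = 1`, odd-index Euler numbers vanish, and
`∑_{j≤n} C(2n,2j) E_{2j} = 0` for `n ≥ 1`). -/
def E2 : ℕ → ℤ
  | 0 => 1
  | n + 1 => -∑ k ∈ (Finset.range (n+1)).attach,
      ((2*(n+1)).choose (2*k.1) : ℤ) * E2 k.1
decreasing_by exact Finset.mem_range.mp k.2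

/-- Thue–Morse sequence: `tm 0 = 0`, `tm (2n) = tm n`, `tm (2n+1) = 1 - tm n`. -/
def tm : ℕ → ℕ
  | 0 => 0
  | n + 1 => if (n+1) % 2 = 0 then tm ((n+1)/2) else 1 - tm ((n+1)/2)
decreasing_by all_goals exact Nat.div_lt_self (Nat.succ_pos n) one_lt_two

/-- Paperfolding (dragon-curve) sequence: `pf (2n) = pf n`, `pf (4n+1) = 0`,
`pf (4n+3) = 1` (with `pf 0 = 0`). -/
def pf : ℕ → ℕ
  | 0 => 0
  | n + 1 => if (n+1) % 2 = 0 then pf ((n+1)/2) else if (n+1) % 4 = 1 then 0 else 1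
decreasing_by exact Nat.div_lt_self (Nat.succ_pos n) one_lt_two

open Real Set

lemma bernoulli'_five : bernoulli' 5 = 0 := by
  rw [bernoulli'_def]
  simp [Finset.sum_range_succ, bernoulli'_zero, bernoulli'_one, bernoulli'_two, bernoulli'_three,
    bernoulli'_four]
  norm_num [Nat.choose]

lemma bernoulli'_six : bernoulli' 6 = 1/42 := by
  rw [bernoulli'_def]
  simp [Finset.sum_range_succ, bernoulli'_zero, bernoulli'_one, bernoulli'_two, bernoulli'_three,
    bernoulli'_four, bernoulli'_five]
  norm_num [Nat.choose]


lemma bernoulli'_seven : bernoulli' 7 = 0 := by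
  rw [bernoulli'_def]
  simp [Finset.sum_range_succ, bernoulli'_zero, bernoulli'_one, bernoulli'_two, bernoulli'_three,
    bernoulli'_four, bernoulli'_five, bernoulli'_six]
  norm_num [Nat.choose]

lemma bern7eval : (Polynomial.bernoulli 7).eval (1/4 : ℚ) = 427/16384 := by
  simp_rw [Polynomial.bernoulli, Finset.sum_range_succ, Polynomial.eval_add,
    Polynomial.eval_monomial]
  rw [Finset.sum_range_zero, Polynomial.eval_zero, zero_add, bernoulli_one]
  rw [bernoulli_eq_bernoulli'_of_ne_one zero_ne_one, bernoulli'_zero,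
    bernoulli_eq_bernoulli'_of_ne_one (by decide : 2 ≠ 1), bernoulli'_two,
    bernoulli_eq_bernoulli'_of_ne_one (by decide : 3 ≠ 1), bernoulli'_three,
    bernoulli_eq_bernoulli'_of_ne_one (by decide : 4 ≠ 1), bernoulli'_four,
    bernoulli_eq_bernoulli'_of_ne_one (by decide : 5 ≠ 1), bernoulli'_five,
    bernoulli_eq_bernoulli'_of_ne_one (by decide : 6 ≠ 1), bernoulli'_six,
    bernoulli_eq_bernoulli'_of_ne_one (by decide : 7 ≠ 1), bernoulli'_seven]
  norm_num [Nat.choose]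

lemma hasSum_beta7 :
    HasSum (fun n : ℕ => (1:ℝ) / (n : ℝ) ^ 7 * Real.sin (π * n / 2)) (61 * π ^ 7 / 184320) := by
  apply (congr_arg₂ HasSum ?_ ?_).to_iff.mp <|
    hasSum_one_div_nat_pow_mul_sin (three_ne_zero) (?_ : (1/4 : ℝ) ∈ Icc (0 : ℝ) 1)
  · ext1 n
    norm_num [Nat.choose]
    left
    congr 1
    ring
  · have : (1 / 4 : ℝ) = (algebraMap ℚ ℝ) (1 / 4 : ℚ) := by norm_num
    rw [this, mul_pow, Polynomial.eval_map, Polynomial.eval₂_at_apply,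
      (by norm_num : 2 * 3 + 1 = 7), bern7eval]
    have h7 : bernoulli' 7 = 0 := by
      rw [bernoulli'_def]
      simp [Finset.sum_range_succ, bernoulli'_zero, bernoulli'_one, bernoulli'_two,
        bernoulli'_three, bernoulli'_four, bernoulli'_five, bernoulli'_six]
      norm_num [Nat.choose]
    norm_num [Nat.factorial]
    field_simp
    ring
  · rw [mem_Icc]; constructor <;> linarith
lemma pf_two_mul (m : ℕ) : pf (2*m) = pf m := by
  match m with
  | 0 => rfl
  | k+1 =>
    show pf (2*k+1+1) = _
    rw [pf]
    have h : (2*k+1+1) % 2 = 0 := by omega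
    have hd : (2*k+1+1)/2 = k+1 := by omega
    simp [h, hd]

lemma pf_four_one (k : ℕ) : pf (4*k+1) = 0 := by
  show pf (4*k+0+1) = 0
  rw [pf]
  have h2 : (4*k+0+1) % 2 = 1 := by omega
  have h4 : (4*k+0+1) % 4 = 1 := by omega
  simp [h2, h4]

lemma pf_four_three (k : ℕ) : pf (4*k+3) = 1 := by
  show pf (4*k+2+1) = 1
  rw [pf]
  have h2 : (4*k+2+1) % 2 = 1 := by omega
  have h4 : (4*k+2+1) % 4 = 3 := by omega
  simp [h2, h4]

lemma pf_pow_mul (j q : ℕ) : pf (2^j * q) = pf q := by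
  induction j with
  | zero => simp
  | succ j ih => rw [pow_succ, mul_comm (2^j) 2, mul_assoc, pf_two_mul, ih]

lemma pf_odd (m : ℕ) : (2 * (pf (2*m+1) : ℝ) - 1) = (-1)^(m+1) := by
  rcases Nat.even_or_odd m with ⟨k, hk⟩ | ⟨k, hk⟩
  · subst hk
    rw [(by ring : 2*(k+k)+1 = 4*k+1), pf_four_one, pow_succ, Even.neg_one_pow ⟨k, rfl⟩]
    norm_num
  · subst hk
    rw [(by ring : 2*(2*k+1)+1 = 4*k+3), pf_four_three, pow_succ,
      Odd.neg_one_pow ⟨k, by ring⟩]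
    norm_num

lemma two_pow_mul_odd_inj : ∀ a b c d : ℕ, 2^a*(2*b+1) = 2^c*(2*d+1) → a = c ∧ b = d := by
  intro a
  induction a with
  | zero =>
    intro b c d h
    match c with
    | 0 => constructor <;> omega
    | k+1 =>
      exfalso
      rw [pow_succ, mul_comm (2^k) 2, mul_assoc] at h
      omega
  | succ n ih =>
    intro b c d h
    match c with
    | 0 =>
      exfalso
      rw [pow_succ, mul_comm (2^n) 2, mul_assoc] at h
      omega
    | k+1 =>
      rw [pow_succ, pow_succ, mul_comm (2^n) 2, mul_comm (2^k) 2, mul_assoc, mul_assoc] at h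
      have h' := Nat.eq_of_mul_eq_mul_left (by norm_num) h
      obtain ⟨h1, h2⟩ := ih b k d h'
      exact ⟨by omega, h2⟩

lemma exists_two_pow_mul_odd (n : ℕ) : ∃ a b : ℕ, 2^a*(2*b+1) = n+1 := by
  induction n using Nat.strong_induction_on with
  | _ n ih =>
    rcases Nat.even_or_odd n with ⟨k, hk⟩ | ⟨k, hk⟩
    · exact ⟨0, k, by omega⟩
    · obtain ⟨a, b, hab⟩ := ih k (by omega)
      refine ⟨a+1, b, ?_⟩
      rw [pow_succ, mul_comm (2^a) 2, mul_assoc, hab]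
      omega

theorem paperfolding_seventh_pi :
    8128 * ∑' n : ℕ, (2 * (pf (n+1) : ℝ) - 1) / ((n:ℝ) + 1) ^ 7 =
      -(122/45) * Real.pi ^ 7 := by
  -- the odd-index alternating sum
  have hsin : ∀ m : ℕ, Real.sin (π * (2*m+1 : ℕ) / 2) = (-1)^m := by
    intro m
    have h1 : π * ((2*m+1 : ℕ) : ℝ) / 2 = (m:ℝ)*π + π/2 := by push_cast; ring
    have h2 := Real.cos_nat_mul_pi_sub 0 m
    rw [h1, Real.sin_add, Real.sin_nat_mul_pi, Real.cos_pi_div_two, Real.sin_pi_div_two]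
    simp only [sub_zero, Real.cos_zero, mul_one] at h2
    rw [h2]; ring
  have hg : HasSum (fun m : ℕ => (-1:ℝ)^(m+1) / (2*(m:ℝ)+1)^7) (-(61 * π ^ 7 / 184320)) := by
    have hinj : Function.Injective (fun m : ℕ => 2*m+1) := by
      intro x y h
      simp only at h
      omega
    have h0 : ∀ n : ℕ, n ∉ Set.range (fun m : ℕ => 2*m+1) →
        (1:ℝ)/(n:ℝ)^7 * Real.sin (π * n / 2) = 0 := by
      intro n hn
      have : ∃ k, n = 2*k := by
        rcases Nat.even_or_odd n with ⟨k, hk⟩ | ⟨k, hk⟩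
        · exact ⟨k, by omega⟩
        · exact absurd ⟨k, by simp only []; omega⟩ hn
      obtain ⟨k, rfl⟩ := this
      have : π * ((2*k : ℕ) : ℝ) / 2 = (k:ℝ)*π := by push_cast; ring
      rw [this, Real.sin_nat_mul_pi, mul_zero]
    have h := (hinj.hasSum_iff h0).mpr hasSum_beta7
    have h' : HasSum (fun m : ℕ => (-1:ℝ)^m / (2*(m:ℝ)+1)^7) (61 * π ^ 7 / 184320) := by
      refine h.congr_fun fun m => ?_
      simp only [Function.comp_apply]
      rw [hsin m]
      push_cast
      ring
    have := h'.neg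
    refine this.congr_fun fun m => ?_
    rw [pow_succ]
    ring
  -- geometric factor
  have ha : HasSum (fun j : ℕ => ((1:ℝ)/128)^j) (128/127) := by
    have := hasSum_geometric_of_lt_one (by norm_num : (0:ℝ) ≤ 1/128) (by norm_num)
    convert this using 1
    norm_num
  -- summability of the product family
  have hbase : Summable (fun m : ℕ => (1:ℝ)/(2*(m:ℝ)+1)^7) := by
    have h7 : Summable (fun n : ℕ => (1:ℝ)/(n:ℝ)^7) :=
      Real.summable_one_div_nat_pow.mpr (by norm_num)
    have hshift : Summable (fun m : ℕ => (1:ℝ)/((m:ℝ)+1)^7) :=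
      ((summable_nat_add_iff 1).mpr h7).congr fun n => by push_cast; ring
    refine Summable.of_nonneg_of_le (fun m => by positivity) (fun m => ?_) hshift
    have hm : ((m:ℝ)+1)^7 ≤ (2*(m:ℝ)+1)^7 := by
      apply pow_le_pow_left₀ (by positivity)
      linarith [Nat.cast_nonneg (α := ℝ) m]
    exact div_le_div_of_nonneg_left one_pos.le (by positivity) hm
  have hsum : Summable (fun p : ℕ × ℕ =>
      ((1:ℝ)/128)^p.1 * ((-1:ℝ)^(p.2+1) / (2*(p.2:ℝ)+1)^7)) := by
    rw [← summable_abs_iff]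
    refine Summable.congr (Summable.mul_of_nonneg ⟨_, ha⟩ hbase
      (fun j => by positivity) (fun m => by positivity)) fun p => ?_
    rw [abs_mul, abs_div, abs_pow, abs_pow, abs_pow, abs_neg, abs_one, one_pow,
      abs_of_nonneg (by norm_num : (0:ℝ) ≤ 1/128),
      abs_of_nonneg (by positivity : (0:ℝ) ≤ 2*(p.2:ℝ)+1)]
  have hG := ha.mul hg hsum
  -- transport along the bijection
  have hbij : Function.Bijective (fun p : ℕ × ℕ => 2^p.1*(2*p.2+1) - 1) := by
    constructor
    · rintro ⟨a, b⟩ ⟨c, d⟩ h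
      simp only at h
      have pa : 1 ≤ 2^a*(2*b+1) := Nat.one_le_iff_ne_zero.mpr (by positivity)
      have pc : 1 ≤ 2^c*(2*d+1) := Nat.one_le_iff_ne_zero.mpr (by positivity)
      have : 2^a*(2*b+1) = 2^c*(2*d+1) := by omega
      obtain ⟨h1, h2⟩ := two_pow_mul_odd_inj a b c d this
      simp [h1, h2]
    · intro n
      obtain ⟨a, b, hab⟩ := exists_two_pow_mul_odd n
      exact ⟨⟨a, b⟩, by simp; omega⟩
  have hF : HasSum (fun n : ℕ => (2 * (pf (n+1) : ℝ) - 1) / ((n:ℝ) + 1) ^ 7)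
      ((128/127) * (-(61 * π ^ 7 / 184320))) := by
    rw [← (Equiv.ofBijective _ hbij).hasSum_iff]
    refine hG.congr_fun fun p => ?_
    obtain ⟨j, m⟩ := p
    simp only [Function.comp_apply, Equiv.ofBijective_apply]
    have pa : 1 ≤ 2^j*(2*m+1) := Nat.one_le_iff_ne_zero.mpr (by positivity)
    have hn1 : 2^j*(2*m+1) - 1 + 1 = 2^j*(2*m+1) := by omega
    rw [hn1, pf_pow_mul]
    have hc : ((2^j*(2*m+1) - 1 : ℕ) : ℝ) + 1 = (2:ℝ)^j * (2*(m:ℝ)+1) := by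
      have : ((2^j*(2*m+1) - 1 : ℕ) : ℝ) = ((2^j*(2*m+1) : ℕ) : ℝ) - 1 := by
        rw [Nat.cast_sub pa]; norm_num
      rw [this]; push_cast; ring
    rw [hc, pf_odd m, mul_pow]
    have h2 : ((2:ℝ)^j)^7 = 128^j := by
      rw [← pow_mul, mul_comm, pow_mul]; norm_num
    rw [h2, div_pow, one_pow, div_mul_div_comm, one_mul]
  rw [hF.tsum_eq]
  ring_nf
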